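/- Let Γ be a finite connected tree-like multigraph (i.e., Γ becomes a tree after contracting all its loops), v0 a vertex of Γ, and μ a degree-d polarization on Γ. Then there is exactly one (v0,μ)-quasistable degree-d divisor on Γ. -/

import Mathlib

/-- A finite multigraph: each edge has two (possibly equal) endpoints
(loops and parallel edges are allowed). -/
structure Multigraph where
  V : Type
  E : Type
  [fV : Fintype V]
  [dV : DecidableEq V]
  [fE : Fintype E]
  [dE : DecidableEq E]
  ends1 : E → V
  ends2 : E → V

attribute [instance] Multigraph.fV Multigraph.dV Multigraph.fE Multigraph.dE

namespace Multigraph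

variable (G : Multigraph)

/-- The edge `e` joins the vertices `v` and `w`. -/
def Joins (e : G.E) (v w : G.V) : Prop :=
  (G.ends1 e = v ∧ G.ends2 e = w) ∨ (G.ends1 e = w ∧ G.ends2 e = v)

instance (e : G.E) (v w : G.V) : Decidable (G.Joins e v w) := by
  unfold Joins; infer_instance

/-- `E(A,B)`: the set of edges joining a vertex of `A ∖ B` to a vertex of `B ∖ A`. -/
def betweenSet (A B : Finset G.V) : Finset G.E :=
  Finset.univ.filter fun e => ∃ v ∈ A \ B, ∃ w ∈ B \ A, G.Joins e v w

/-- `δ_A := |E(A, Aᶜ)|`. -/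
def delta (A : Finset G.V) : ℕ := (G.betweenSet A Aᶜ).card

/-- One step along an edge belonging to `S`. -/
def Step (S : Set G.E) (v w : G.V) : Prop := ∃ e ∈ S, G.Joins e v w

/-- The spanning subgraph with edge set `S` is connected. -/
def ConnectedOn (S : Set G.E) : Prop :=
  ∀ v w : G.V, Relation.ReflTransGen (G.Step S) v w

def Connected : Prop := G.ConnectedOn Set.univ

/-- A spanning tree: a subset of edges making a connected spanning subgraph whose number
of edges equals the number of vertices minus one. -/
def IsSpanningTree (T : Finset G.E) : Prop :=
  G.ConnectedOn ↑T ∧ T.card + 1 = Fintype.card G.V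

/-- First Betti number of a connected graph. -/
def firstBetti : ℕ := Fintype.card G.E + 1 - Fintype.card G.V

/-- Degree of a divisor. -/
def deg (D : G.V → ℤ) : ℤ := ∑ v, D v

/-- A degree-`d` polarization. -/
def IsPolarization (μ : G.V → ℝ) (d : ℤ) : Prop := (∑ v, μ v) = (d : ℝ)

/-- `β_D(A) = deg(D|_A) - μ(A) + δ_A / 2`. -/
noncomputable def beta (μ : G.V → ℝ) (D : G.V → ℤ) (A : Finset G.V) : ℝ :=
  (∑ v ∈ A, (D v : ℝ)) - (∑ v ∈ A, μ v) + (G.delta A : ℝ) / 2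

/-- `D` is `(v0,μ)`-quasistable: `β_D(A) ≥ 0` for every proper subset `A` of the vertices,
with strict inequality whenever `v0 ∈ A`. -/
def Quasistable (μ : G.V → ℝ) (v0 : G.V) (D : G.V → ℤ) : Prop :=
  ∀ A : Finset G.V, A ⊂ Finset.univ →
    0 ≤ G.beta μ D A ∧ (v0 ∈ A → 0 < G.beta μ D A)

/-- Number of incidences of `v` with edges in `S` (loops counted twice). -/
def valIn (S : Finset G.E) (v : G.V) : ℕ :=
  ∑ e ∈ S, ((if G.ends1 e = v then 1 else 0) + (if G.ends2 e = v then 1 else 0))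

/-- Valence of a vertex (loops counted twice). -/
def val (v : G.V) : ℕ := G.valIn Finset.univ v

/-- The vertices of the `S`-subdivision: original vertices plus one exceptional vertex
for each edge in `S`. -/
abbrev subV (S : Finset G.E) : Type := G.V ⊕ {e : G.E // e ∈ S}

/-- The `S`-subdivision of `G`: each edge `e ∈ S` is replaced by two edges meeting at a new
exceptional vertex. -/
def subdiv (S : Finset G.E) : Multigraph where
  V := G.subV S
  E := {e : G.E // e ∉ S} ⊕ ({e : G.E // e ∈ S} × Bool)
  ends1 := fun e => match e with
    | Sum.inl x => Sum.inl (G.ends1 x.1)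
    | Sum.inr (x, false) => Sum.inl (G.ends1 x.1)
    | Sum.inr (x, true) => Sum.inr x
  ends2 := fun e => match e with
    | Sum.inl x => Sum.inl (G.ends2 x.1)
    | Sum.inr (x, false) => Sum.inr x
    | Sum.inr (x, true) => Sum.inl (G.ends2 x.1)

/-- The polarization `μ^S` on the `S`-subdivision: `μ` on old vertices, `0` on
exceptional vertices. -/
noncomputable def subPol (S : Finset G.E) (μ : G.V → ℝ) : G.subV S → ℝ :=
  Sum.elim μ fun _ => 0

/-- A divisor on the `S`-subdivision is a pseudo-divisor when it takes value `-1` at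
every exceptional vertex. -/
def IsPseudoDivisor (S : Finset G.E) (D : G.subV S → ℤ) : Prop :=
  ∀ x : {e : G.E // e ∈ S}, D (Sum.inr x) = -1

/-- `(S,D)` is a `(v0,μ)`-quasistable degree-`d` pseudo-divisor on `G`. -/
def QSPseudo (μ : G.V → ℝ) (v0 : G.V) (d : ℤ) (S : Finset G.E)
    (D : G.subV S → ℤ) : Prop :=
  G.IsPseudoDivisor S D ∧ (∑ v, D v) = d ∧
    (G.subdiv S).Quasistable (G.subPol S μ) (Sum.inl v0) D

/-- The graph obtained by deleting the edges in `S`. -/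
def deleteEdges (S : Finset G.E) : Multigraph where
  V := G.V
  E := {e : G.E // e ∉ S}
  ends1 := fun e => G.ends1 e.1
  ends2 := fun e => G.ends2 e.1

/-- A pseudo-divisor on `G`: a subset of edges together with a divisor on the associated
subdivision. -/
def PD : Type := Σ S : Finset G.E, (G.subV S → ℤ)

variable {G}

/-- The specialization (partial) order on pseudo-divisors on a fixed graph:
`PDLe x y` holds when `y` specializes to `x`, i.e. `x.1 ⊆ y.1` and there is a
specialization `Γ^{y.1} → Γ^{x.1}` compatible with the identity of `Γ` (each exceptional
vertex over an edge of `y.1 ∖ x.1` is merged into one of the two endpoints of that edge)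
carrying `y.2` to `x.2`. -/
def PDLe (x y : G.PD) : Prop :=
  ∃ h : x.1 ⊆ y.1, ∃ c : G.E → G.V,
    (∀ e ∈ y.1 \ x.1, c e = G.ends1 e ∨ c e = G.ends2 e) ∧
    (∀ v : G.V, x.2 (Sum.inl v) =
      y.2 (Sum.inl v) + ∑ e ∈ (y.1 \ x.1).attach,
        (if c e.1 = v then y.2 (Sum.inr ⟨e.1, (Finset.mem_sdiff.mp e.2).1⟩) else 0)) ∧
    (∀ (e : G.E) (hx : e ∈ x.1), x.2 (Sum.inr ⟨e, hx⟩) = y.2 (Sum.inr ⟨e, h hx⟩))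

/-- Strict specialization order on pseudo-divisors. -/
def PDLt (x y : G.PD) : Prop := PDLe x y ∧ x ≠ y

variable (G)

/-- The set `QD_{v0,μ}(G)` of `(v0,μ)`-quasistable degree-`d` pseudo-divisors on `G`. -/
def QDSet (μ : G.V → ℝ) (v0 : G.V) (d : ℤ) : Set G.PD :=
  {x | G.QSPseudo μ v0 d x.1 x.2}

end Multigraph

/-- A specialization `G → G'` of multigraphs: the contraction of a subset of the edges of
`G`. It is encoded by the map `vmap` on vertices and the identification `emap` of the
edges of `G'` with the non-contracted edges of `G`; the fibers of `vmap` are exactly the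
connected components spanned by contracted edges. -/
structure Multigraph.Spec (G G' : Multigraph) where
  vmap : G.V → G'.V
  emap : G'.E → G.E
  emap_inj : Function.Injective emap
  vmap_surj : Function.Surjective vmap
  joins_comm : ∀ e' : G'.E,
    G'.Joins e' (vmap (G.ends1 (emap e'))) (vmap (G.ends2 (emap e')))
  glue : ∀ e : G.E, (¬ ∃ e', emap e' = e) → vmap (G.ends1 e) = vmap (G.ends2 e)
  fiber_conn : ∀ v w : G.V, vmap v = vmap w →
    Relation.ReflTransGen
      (fun a b => ∃ e : G.E, (¬ ∃ e', emap e' = e) ∧ G.Joins e a b) v w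

namespace Multigraph.Spec

variable {G G' : Multigraph} (f : Multigraph.Spec G G')

/-- The set of edges contracted by the specialization. -/
def contracted : Finset G.E := Finset.univ.filter fun e => ¬ ∃ e', f.emap e' = e

/-- Pushforward of a polarization. -/
noncomputable def pushPol (μ : G.V → ℝ) : G'.V → ℝ := fun v' => ∑ v, if f.vmap v = v' then μ v else 0

/-- Pushforward of a divisor. -/
def pushDiv (D : G.V → ℤ) : G'.V → ℤ := fun v' => ∑ v, if f.vmap v = v' then D v else 0

/-- The edge set `S ∩ E(G')` of the pushforward of a pseudo-divisor `(S,D)`. -/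
def pushEdges (S : Finset G.E) : Finset G'.E :=
  Finset.univ.filter fun e' => f.emap e' ∈ S

/-- Pushforward of the divisor part of a pseudo-divisor `(S,D)` along the induced
specialization `G^S → G'^{S ∩ E(G')}`. -/
def pushPDFun (S : Finset G.E) (D : G.subV S → ℤ) :
    G'.subV (f.pushEdges S) → ℤ
  | Sum.inl v' => (∑ v, if f.vmap v = v' then D (Sum.inl v) else 0) +
      ∑ e ∈ S.attach,
        (if e.1 ∈ f.contracted ∧ f.vmap (G.ends1 e.1) = v' then D (Sum.inr e) else 0)
  | Sum.inr x => D (Sum.inr ⟨f.emap x.1, (Finset.mem_filter.mp x.2).2⟩)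

/-- Pushforward of a pseudo-divisor along a specialization. -/
def pushPD (x : G.PD) : G'.PD := ⟨f.pushEdges x.1, f.pushPDFun x.1 x.2⟩

end Multigraph.Spec

open Multigraph

namespace Multigraph

/-- A tree-like graph: a connected graph which becomes a tree after contracting all its
loops (equivalently, whose number of non-loop edges equals its number of vertices minus
one). -/
def TreeLike (G : Multigraph) : Prop :=
  G.Connected ∧
    (Finset.univ.filter fun e : G.E => G.ends1 e ≠ G.ends2 e).card + 1 =
      Fintype.card G.V

end Multigraph

/-! Every non-loop edge `e` of a tree-like graph is a bridge (a connected graph needs `|V| - 1`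
non-loop edges); let `F_e` be its side not
containing `v0`. Following a path from `v0` to `w` and recording the edges at which the path
enters or leaves `A` gives, for every `g : V → M`,
`∑_{A} g = [v0 ∈ A] ∑ g + ∑_e c_e(A) ∑_{F_e} g`, where `c_e(A) ∈ {-1, 0, 1}` is the sign with
which `e` crosses `A`. Hence a divisor is determined by its degree and its degrees on the sides
`F_e`, and these can be prescribed freely. The same identity turns `β_D(A)` into
`∑_e (c_e(A) s_e + |c_e(A)| / 2)` with `s_e = D(F_e) - μ(F_e)`; testing quasistability on `F_e`
and on its complement shows that `D` is quasistable iff `-1/2 ≤ s_e < 1/2` for every `e`,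
i.e. iff `D(F_e) = ⌈μ(F_e) - 1/2⌉`. -/

namespace Multigraph

open Finset

variable {G : Multigraph}

theorem Joins.symm {e : G.E} {v w : G.V} (h : G.Joins e v w) : G.Joins e w v :=
  Or.symm h

theorem Joins.ends_ne {e : G.E} {v w : G.V} (h : G.Joins e v w) (hvw : v ≠ w) :
    G.ends1 e ≠ G.ends2 e := by
  rcases h with ⟨rfl, rfl⟩ | ⟨rfl, rfl⟩
  exacts [hvw, hvw.symm]

theorem card_le_card_filter_ends_ne_add_one {S : Finset G.E} {v0 : G.V}
    (h : ∀ w, Relation.ReflTransGen (G.Step ↑S) v0 w) :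
    Fintype.card G.V ≤ #{e ∈ S | G.ends1 e ≠ G.ends2 e} + 1 := by
  classical
  let H := SimpleGraph.fromRel (G.Step ↑S)
  have hconn : H.Connected := by
    refine H.connected_iff_exists_forall_reachable.2 ⟨v0, fun w => ?_⟩
    induction h w with
    | refl => rfl
    | @tail b c _ hstep ih =>
      by_cases hbc : b = c
      · exact hbc ▸ ih
      · exact ih.trans (SimpleGraph.Adj.reachable (by simp [H, hbc, hstep]))
  have hedges : H.edgeFinset ⊆
      {e ∈ S | G.ends1 e ≠ G.ends2 e}.image fun e => s(G.ends1 e, G.ends2 e) := by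
    intro z hz
    induction z using Sym2.ind with
    | h u w =>
      simp only [SimpleGraph.mem_edgeFinset, SimpleGraph.mem_edgeSet, H,
        SimpleGraph.fromRel_adj] at hz
      obtain ⟨huw, hstep⟩ := hz
      obtain ⟨e, he, hj⟩ : G.Step ↑S u w := hstep.elim id fun ⟨e, he, hj⟩ => ⟨e, he, hj.symm⟩
      refine mem_image.2 ⟨e, mem_filter.2 ⟨he, hj.ends_ne huw⟩, ?_⟩
      rcases hj with ⟨rfl, rfl⟩ | ⟨rfl, rfl⟩ <;> simp [Sym2.eq_swap]
  calc Fintype.card G.V = Nat.card G.V := Nat.card_eq_fintype_card.symm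
    _ ≤ Nat.card H.edgeSet + 1 := hconn.card_vert_le_card_edgeSet_add_one
    _ = #H.edgeFinset + 1 := by rw [SimpleGraph.edgeFinset_card, Nat.card_eq_fintype_card]
    _ ≤ _ := by grw [card_le_card hedges, card_image_le]

open Classical in
noncomputable def farSide (v0 : G.V) (e : G.E) : Finset G.V :=
  {w | ¬ Relation.ReflTransGen (G.Step ↑(univ.erase e)) v0 w}

noncomputable def farEnd (v0 : G.V) (e : G.E) : G.V :=
  if G.ends1 e ∈ farSide v0 e then G.ends1 e else G.ends2 e

noncomputable def nearEnd (v0 : G.V) (e : G.E) : G.V :=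
  if G.ends1 e ∈ farSide v0 e then G.ends2 e else G.ends1 e

variable {v0 : G.V}

theorem mem_farSide {e : G.E} {w : G.V} :
    w ∈ farSide v0 e ↔ ¬ Relation.ReflTransGen (G.Step ↑(univ.erase e)) v0 w := by
  simp [farSide]

theorem notMem_farSide (e : G.E) : v0 ∉ farSide v0 e :=
  fun h => mem_farSide.1 h .refl

theorem mem_farSide_iff_of_joins {e f : G.E} {x y : G.V} (hfe : f ≠ e) (hj : G.Joins f x y) :
    x ∈ farSide v0 e ↔ y ∈ farSide v0 e := by
  have hf : f ∈ (↑(univ.erase e) : Set G.E) := by simpa using hfe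
  simp only [mem_farSide, not_iff_not]
  exact ⟨fun h => h.tail ⟨f, hf, hj⟩, fun h => h.tail ⟨f, hf, hj.symm⟩⟩

variable (v0) in
theorem joins_iff_farEnd_nearEnd {e : G.E} {x y : G.V} :
    G.Joins e x y ↔
      (x = farEnd v0 e ∧ y = nearEnd v0 e) ∨ (x = nearEnd v0 e ∧ y = farEnd v0 e) := by
  unfold Joins farEnd nearEnd
  split_ifs <;> constructor <;> rintro (⟨rfl, rfl⟩ | ⟨rfl, rfl⟩) <;> simp

theorem joins_farEnd_nearEnd (e : G.E) : G.Joins e (farEnd v0 e) (nearEnd v0 e) :=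
  (joins_iff_farEnd_nearEnd v0).2 (.inl ⟨rfl, rfl⟩)

theorem farEnd_eq_nearEnd_of_ends_eq {e : G.E} (he : G.ends1 e = G.ends2 e) :
    farEnd v0 e = nearEnd v0 e := by
  unfold farEnd nearEnd
  split_ifs <;> simp [he]

theorem farEnd_mem_farSide_of_nearEnd_mem {e : G.E} (h : nearEnd v0 e ∈ farSide v0 e) :
    farEnd v0 e ∈ farSide v0 e := by
  unfold farEnd nearEnd at *
  split_ifs at * with h1
  exacts [h1, absurd h h1]

theorem farSide_nonempty (htree : G.TreeLike) {e : G.E} (he : G.ends1 e ≠ G.ends2 e) :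
    (farSide v0 e).Nonempty := by
  by_contra hempty
  have hreach : ∀ w, Relation.ReflTransGen (G.Step ↑(univ.erase e)) v0 w :=
    fun w => not_not.1 fun h => hempty ⟨w, mem_farSide.2 h⟩
  have hcard := card_le_card_filter_ends_ne_add_one hreach
  have hmem : e ∈ ({e | G.ends1 e ≠ G.ends2 e} : Finset G.E) := by simpa using he
  rw [filter_erase, card_erase_of_mem hmem, ← htree.2] at hcard
  have := card_pos.2 ⟨e, hmem⟩
  omega

theorem farEnd_mem_farSide_and_nearEnd_notMem (htree : G.TreeLike) {e : G.E}
    (he : G.ends1 e ≠ G.ends2 e) :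
    farEnd v0 e ∈ farSide v0 e ∧ nearEnd v0 e ∉ farSide v0 e := by
  obtain ⟨w, hw⟩ := farSide_nonempty htree he (v0 := v0)
  suffices ∃ x ∉ farSide v0 e, ∃ y ∈ farSide v0 e, G.Joins e x y by
    obtain ⟨x, hx, y, hy, hj⟩ := this
    rcases (joins_iff_farEnd_nearEnd v0).1 hj with ⟨rfl, rfl⟩ | ⟨rfl, rfl⟩
    · exact absurd (farEnd_mem_farSide_of_nearEnd_mem hy) hx
    · exact ⟨hy, hx⟩
  induction htree.1 v0 w with
  | refl => exact absurd hw (notMem_farSide e)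
  | @tail b c _ hstep ih =>
    by_cases hb : b ∈ farSide v0 e
    · exact ih hb
    obtain ⟨f, -, hj⟩ := hstep
    by_cases hfe : f = e
    · exact ⟨b, hb, c, hw, hfe ▸ hj⟩
    · exact absurd ((mem_farSide_iff_of_joins hfe hj).2 hw) hb

noncomputable def crossSign (v0 : G.V) (A : Finset G.V) (e : G.E) : ℤ :=
  (if farEnd v0 e ∈ A then 1 else 0) - if nearEnd v0 e ∈ A then 1 else 0

theorem crossSign_eq_zero_of_ends_eq {A : Finset G.V} {e : G.E} (he : G.ends1 e = G.ends2 e) :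
    crossSign v0 A e = 0 := by
  rw [crossSign, farEnd_eq_nearEnd_of_ends_eq he, sub_self]

theorem abs_crossSign_le_one (A : Finset G.V) (e : G.E) : |crossSign v0 A e| ≤ 1 := by
  unfold crossSign
  split_ifs <;> simp

theorem crossSign_compl (A : Finset G.V) (e : G.E) : crossSign v0 Aᶜ e = -crossSign v0 A e := by
  unfold crossSign
  split_ifs <;> simp_all

theorem crossSign_farSide (htree : G.TreeLike) {e : G.E} (he : G.ends1 e ≠ G.ends2 e) (f : G.E) :
    crossSign v0 (farSide v0 e) f = if f = e then 1 else 0 := by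
  split_ifs with hfe
  · subst hfe
    simp [crossSign, farEnd_mem_farSide_and_nearEnd_notMem htree he]
  · simp [crossSign, mem_farSide_iff_of_joins hfe (joins_farEnd_nearEnd f)]

variable (v0) in
theorem indicator_eq_add_sum_crossSign (htree : G.TreeLike) (A : Finset G.V) (w : G.V) :
    (if w ∈ A then 1 else 0 : ℤ) =
      (if v0 ∈ A then 1 else 0) + ∑ e, crossSign v0 A e * if w ∈ farSide v0 e then 1 else 0 := by
  induction htree.1 v0 w with
  | refl => simp [notMem_farSide]
  | @tail b c _ hstep ih =>
    obtain ⟨g, -, hg⟩ := hstep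
    by_cases hbc : b = c
    · exact hbc ▸ ih
    suffices ∑ e, crossSign v0 A e * ((if c ∈ farSide v0 e then 1 else 0) -
        if b ∈ farSide v0 e then 1 else 0) = (if c ∈ A then 1 else 0) - if b ∈ A then 1 else 0 by
      simp only [mul_sub, sum_sub_distrib] at this
      linarith
    rw [sum_eq_single g]
    · have hends := farEnd_mem_farSide_and_nearEnd_notMem (v0 := v0) htree (hg.ends_ne hbc)
      rcases (joins_iff_farEnd_nearEnd v0).1 hg with ⟨rfl, rfl⟩ | ⟨rfl, rfl⟩ <;>
        simp [crossSign, hends]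
    · intro e _ hge
      simp [mem_farSide_iff_of_joins (Ne.symm hge) hg]
    · simp

variable (v0) in
theorem sum_eq_add_sum_crossSign_smul {M : Type*} [AddCommGroup M] (htree : G.TreeLike)
    (g : G.V → M) (A : Finset G.V) :
    ∑ v ∈ A, g v =
      (if v0 ∈ A then ∑ v, g v else 0) + ∑ e, crossSign v0 A e • ∑ v ∈ farSide v0 e, g v := by
  calc ∑ v ∈ A, g v = ∑ v, (if v ∈ A then 1 else 0 : ℤ) • g v := by simp [ite_smul]
    _ = ∑ v, ((if v0 ∈ A then 1 else 0 : ℤ) +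
          ∑ e, crossSign v0 A e * if v ∈ farSide v0 e then 1 else 0) • g v :=
      sum_congr rfl fun v _ => by rw [← indicator_eq_add_sum_crossSign v0 htree A]
    _ = _ := by
      simp_rw [add_smul, sum_add_distrib, sum_smul, mul_smul]
      rw [sum_comm]
      simp [ite_smul, ← smul_sum, sum_ite_mem]

theorem exists_crossSign_eq_neg_one (htree : G.TreeLike) {A : Finset G.V} (hv0 : v0 ∈ A)
    {w : G.V} (hw : w ∉ A) : ∃ e, crossSign v0 A e = -1 := by
  have hind := indicator_eq_add_sum_crossSign v0 htree A w
  rw [if_neg hw, if_pos hv0] at hind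
  obtain ⟨e, -, he⟩ : ∃ e ∈ univ, crossSign v0 A e * (if w ∈ farSide v0 e then 1 else 0) < 0 :=
    exists_lt_of_sum_lt (by rw [sum_const_zero]; linarith)
  have := abs_le.1 (abs_crossSign_le_one (v0 := v0) A e)
  exact ⟨e, by split_ifs at he <;> omega⟩

variable (v0) in
theorem delta_eq_sum_abs_crossSign (A : Finset G.V) :
    (G.delta A : ℤ) = ∑ e, |crossSign v0 A e| := by
  rw [delta, betweenSet, card_filter]
  push_cast
  refine sum_congr rfl fun e _ => ?_
  simp only [mem_sdiff, mem_compl, not_not, and_self, joins_iff_farEnd_nearEnd v0]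
  unfold crossSign
  split_ifs <;> grind

variable (v0) in
theorem beta_eq_sum (htree : G.TreeLike) {μ : G.V → ℝ} {d : ℤ} (hμ : G.IsPolarization μ d)
    {D : G.V → ℤ} (hD : G.deg D = d) (A : Finset G.V) :
    G.beta μ D A = ∑ e, ((crossSign v0 A e : ℝ) * ∑ v ∈ farSide v0 e, ((D v : ℝ) - μ v) +
      |(crossSign v0 A e : ℝ)| / 2) := by
  have htotal : ∑ v, ((D v : ℝ) - μ v) = 0 := by
    rw [sum_sub_distrib, hμ, ← hD, deg]
    push_cast
    ring
  have hδ : (G.delta A : ℝ) = ∑ e, |(crossSign v0 A e : ℝ)| := by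
    exact_mod_cast delta_eq_sum_abs_crossSign v0 A
  rw [beta, ← sum_sub_distrib, sum_eq_add_sum_crossSign_smul v0 htree, htotal, hδ, sum_add_distrib,
    sum_div]
  simp [zsmul_eq_mul]

theorem zero_le_mul_add_abs_div_two {c : ℤ} (hc : |c| ≤ 1) {s : ℝ} (hs : -(1 / 2) ≤ s)
    (hs' : s < 1 / 2) : 0 ≤ c * s + |(c : ℝ)| / 2 := by
  obtain rfl | rfl | rfl : c = -1 ∨ c = 0 ∨ c = 1 := by rw [abs_le] at hc; omega
  all_goals norm_num <;> linarith

section Quasistable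

variable (htree : G.TreeLike) {μ : G.V → ℝ} {d : ℤ} (hμ : G.IsPolarization μ d) {D : G.V → ℤ}
  (hD : G.deg D = d)
include htree hμ hD

theorem sum_farSide_eq_ceil_of_quasistable (hqs : G.Quasistable μ v0 D) {e : G.E}
    (he : G.ends1 e ≠ G.ends2 e) :
    ∑ v ∈ farSide v0 e, D v = ⌈∑ v ∈ farSide v0 e, μ v - 1 / 2⌉ := by
  set s := ∑ v ∈ farSide v0 e, ((D v : ℝ) - μ v)
  have hβ : G.beta μ D (farSide v0 e) = s + 1 / 2 := by
    rw [beta_eq_sum v0 htree hμ hD, sum_eq_single e (fun f _ hfe => by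
      simp [crossSign_farSide htree he, hfe]) (by simp)]
    simp [s, crossSign_farSide htree he]
  have hβc : G.beta μ D (farSide v0 e)ᶜ = -s + 1 / 2 := by
    rw [beta_eq_sum v0 htree hμ hD, sum_eq_single e (fun f _ hfe => by
      simp [crossSign_compl, crossSign_farSide htree he, hfe]) (by simp)]
    simp [s, crossSign_compl, crossSign_farSide htree he]
  have hfar := (farEnd_mem_farSide_and_nearEnd_notMem (v0 := v0) htree he).1
  have hβ_nonneg := (hqs _ (ssubset_univ_iff.2 fun h => notMem_farSide e (h ▸ mem_univ v0))).1
  have hβc_pos := (hqs _ (ssubset_univ_iff.2 fun h => mem_compl.1 (h ▸ mem_univ _) hfar)).2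
    (mem_compl.2 (notMem_farSide e))
  rw [hβ] at hβ_nonneg
  rw [hβc] at hβc_pos
  rw [eq_comm, Int.ceil_eq_iff]
  simp only [s, sum_sub_distrib] at hβ_nonneg hβc_pos
  push_cast
  constructor <;> linarith

theorem quasistable_of_sum_farSide_eq_ceil
    (h : ∀ e, G.ends1 e ≠ G.ends2 e →
      ∑ v ∈ farSide v0 e, D v = ⌈∑ v ∈ farSide v0 e, μ v - 1 / 2⌉) :
    G.Quasistable μ v0 D := by
  have hbounds : ∀ e, G.ends1 e ≠ G.ends2 e →
      -(1 / 2) ≤ ∑ v ∈ farSide v0 e, ((D v : ℝ) - μ v) ∧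
        ∑ v ∈ farSide v0 e, ((D v : ℝ) - μ v) < 1 / 2 := by
    intro e he
    have := Int.ceil_eq_iff.1 (h e he).symm
    push_cast [sum_sub_distrib] at this ⊢
    constructor <;> linarith
  have hterm : ∀ A e, 0 ≤ (crossSign v0 A e : ℝ) * ∑ v ∈ farSide v0 e, ((D v : ℝ) - μ v) +
      |(crossSign v0 A e : ℝ)| / 2 := by
    intro A e
    by_cases he : G.ends1 e = G.ends2 e
    · simp [crossSign_eq_zero_of_ends_eq he]
    · exact zero_le_mul_add_abs_div_two (abs_crossSign_le_one A e) (hbounds e he).1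
        (hbounds e he).2
  intro A hA
  rw [beta_eq_sum v0 htree hμ hD]
  refine ⟨sum_nonneg fun e _ => hterm A e, fun hv0 => ?_⟩
  obtain ⟨w, -, hw⟩ := exists_of_ssubset hA
  obtain ⟨e, hneg⟩ := exists_crossSign_eq_neg_one htree hv0 hw
  have he : G.ends1 e ≠ G.ends2 e := fun he => by
    simp [crossSign_eq_zero_of_ends_eq he] at hneg
  refine sum_pos' (fun f _ => hterm A f) ⟨e, mem_univ e, ?_⟩
  simp only [hneg, Int.cast_neg, Int.cast_one, abs_neg, abs_one]
  linarith [(hbounds e he).2]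

end Quasistable

variable (v0) in
theorem eq_of_sum_eq_of_sum_farSide_eq {M : Type*} [AddCommGroup M] (htree : G.TreeLike)
    {g g' : G.V → M} (hsum : ∑ v, g v = ∑ v, g' v)
    (hside : ∀ e, G.ends1 e ≠ G.ends2 e → ∑ v ∈ farSide v0 e, g v = ∑ v ∈ farSide v0 e, g' v) :
    g = g' := by
  funext v
  have hterm : ∀ e, crossSign v0 {v} e •
      (∑ w ∈ farSide v0 e, g w - ∑ w ∈ farSide v0 e, g' w) = 0 := by
    intro e
    by_cases he : G.ends1 e = G.ends2 e
    · rw [crossSign_eq_zero_of_ends_eq he, zero_smul]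
    · rw [hside e he, sub_self, smul_zero]
  have h := sum_eq_add_sum_crossSign_smul v0 htree (g - g') {v}
  simp only [Pi.sub_apply, sum_singleton, sum_sub_distrib, hsum, sub_self, ite_self] at h
  simp only [hterm, sum_const_zero, add_zero] at h
  exact sub_eq_zero.1 h

theorem exists_deg_eq_and_sum_farSide_eq (htree : G.TreeLike) (d : ℤ) (n : G.E → ℤ) :
    ∃ D : G.V → ℤ, G.deg D = d ∧
      ∀ e, G.ends1 e ≠ G.ends2 e → ∑ v ∈ farSide v0 e, D v = n e := by
  let D : G.V → ℤ :=
    Pi.single v0 d + ∑ e, n e • (Pi.single (farEnd v0 e) 1 - Pi.single (nearEnd v0 e) 1)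
  have hsum : ∀ A, ∑ v ∈ A, D v = (if v0 ∈ A then d else 0) + ∑ e, n e * crossSign v0 A e := by
    intro A
    simp [D, sum_add_distrib, Finset.sum_apply, sum_comm (s := A), ← mul_sum, sum_pi_single',
      crossSign, mul_sub]
  refine ⟨D, ?_, fun e he => ?_⟩
  · rw [deg]
    simpa [crossSign] using hsum univ
  · rw [hsum, if_neg (notMem_farSide e)]
    simp [crossSign_farSide htree he]

end Multigraph

/-- On a finite connected tree-like multigraph there is exactly one
`(v0,μ)`-quasistable degree-`d` divisor. -/
theorem treelike_unique_quasistable (G : Multigraph) (htree : G.TreeLike)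
    (d : ℤ) (μ : G.V → ℝ) (hμ : G.IsPolarization μ d) (v0 : G.V) :
    ∃! D : G.V → ℤ, G.deg D = d ∧ G.Quasistable μ v0 D := by
  obtain ⟨D0, hdeg0, hsides0⟩ :=
    exists_deg_eq_and_sum_farSide_eq htree d fun e => ⌈∑ v ∈ farSide v0 e, μ v - 1 / 2⌉
  refine ⟨D0, ⟨hdeg0, quasistable_of_sum_farSide_eq_ceil htree hμ hdeg0 hsides0⟩, ?_⟩
  rintro D ⟨hdeg, hqs⟩
  refine eq_of_sum_eq_of_sum_farSide_eq v0 htree ?_ fun e he => ?_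
  · rw [← deg, ← deg, hdeg, hdeg0]
  · rw [sum_farSide_eq_ceil_of_quasistable htree hμ hdeg hqs he, hsides0 e he]
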